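/- Let ℓ ≥ 1 and ρ ∈ ℤ, k ≥ 1 with k ≤ ℓ and ρ^k odd. If 2k ≤ ℓ, then for every a ∈ ℤ and b ∈ {1,-1}, the element (a x^k + b w)(a x^k + b w + ρ^k x^k) is nonzero in ℤ[x,w]/⟨x^{ℓ+1}, w²⟩. -/
import Mathlib


open MvPolynomial

/-- The ideal `⟨x^{ℓ+1}, w²⟩` in `ℤ[x,w]`. -/
noncomputable def trivIdeal (ℓ : ℕ) : Ideal (MvPolynomial (Fin 2) ℤ) :=
  Ideal.span {X 0 ^ (ℓ + 1), X 1 ^ 2}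

lemma aux_coeff_zero (ℓ k : ℕ) (hkl : k ≤ ℓ) (f : MvPolynomial (Fin 2) ℤ)
    (hf : f ∈ trivIdeal ℓ) :
    coeff (Finsupp.single 0 k + Finsupp.single 1 1) f = 0 := by
  obtain ⟨p, q, rfl⟩ := Ideal.mem_span_pair.mp hf
  rw [coeff_add]
  rw [X_pow_eq_monomial, X_pow_eq_monomial, coeff_mul_monomial', coeff_mul_monomial']
  rw [if_neg, if_neg]
  · simp
  · rw [Finsupp.single_le_iff]
    simp
  · rw [Finsupp.single_le_iff]
    simp
    omega

lemma aux_coeff_Q (k : ℕ) (a b c : ℤ) :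
    coeff (Finsupp.single 0 k + Finsupp.single 1 1)
      (((a : MvPolynomial (Fin 2) ℤ) * X 0 ^ k + (b : MvPolynomial (Fin 2) ℤ) * X 1) *
        ((a : MvPolynomial (Fin 2) ℤ) * X 0 ^ k + (b : MvPolynomial (Fin 2) ℤ) * X 1 + (c : MvPolynomial (Fin 2) ℤ) * X 0 ^ k))
      = b * (2 * a + c) := by
  have hQ : ((a : MvPolynomial (Fin 2) ℤ) * X 0 ^ k + (b : MvPolynomial (Fin 2) ℤ) * X 1) *
        ((a : MvPolynomial (Fin 2) ℤ) * X 0 ^ k + (b : MvPolynomial (Fin 2) ℤ) * X 1 + (c : MvPolynomial (Fin 2) ℤ) * X 0 ^ k)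
      = C (a * (a + c)) * X 0 ^ (2 * k) + C (b * (2 * a + c)) * (X 0 ^ k * X 1)
        + C (b * b) * X 1 ^ 2 := by
    simp only [eq_intCast]
    push_cast
    ring
  rw [hQ]
  have h1 : (X 0 : MvPolynomial (Fin 2) ℤ) ^ k * X 1
      = monomial (Finsupp.single 0 k + Finsupp.single 1 1) 1 := by
    rw [X_pow_eq_monomial, X]
    rw [monomial_mul]
    simp
  rw [h1, X_pow_eq_monomial, X_pow_eq_monomial]
  have h2 : (Finsupp.single 1 2 : Fin 2 →₀ ℕ) ≠ Finsupp.single 0 k + Finsupp.single 1 1 := by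
    intro h
    have := DFunLike.congr_fun h 1
    simp [Finsupp.single_apply] at this
  have h3 : (Finsupp.single 0 (k * 2) : Fin 2 →₀ ℕ) ≠ Finsupp.single 0 k + Finsupp.single 1 1 := by
    intro h
    have := DFunLike.congr_fun h 1
    simp [Finsupp.single_apply] at this
  have h3' : (Finsupp.single 0 (2 * k) : Fin 2 →₀ ℕ) ≠ Finsupp.single 0 k + Finsupp.single 1 1 := by
    rw [mul_comm]; exact h3
  simp only [coeff_add, coeff_C_mul, coeff_monomial, if_true, if_neg h2, if_neg h3, if_neg h3']
  ring

theorem stmt8 (ℓ k : ℕ) (hℓ : 1 ≤ ℓ) (hk : 1 ≤ k) (hkl : k ≤ ℓ) (h2k : 2 * k ≤ ℓ)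
    (ρ : ℤ) (hρ : Odd (ρ ^ k)) :
    ∀ (a b : ℤ), (b = 1 ∨ b = -1) →
      ((a : MvPolynomial (Fin 2) ℤ ⧸ trivIdeal ℓ) *
            (Ideal.Quotient.mk (trivIdeal ℓ) (X 0)) ^ k +
          (b : _) * Ideal.Quotient.mk (trivIdeal ℓ) (X 1)) *
        ((a : _) * (Ideal.Quotient.mk (trivIdeal ℓ) (X 0)) ^ k +
            (b : _) * Ideal.Quotient.mk (trivIdeal ℓ) (X 1) +
          ((ρ ^ k : ℤ) : _) * (Ideal.Quotient.mk (trivIdeal ℓ) (X 0)) ^ k) ≠ 0 := by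
  intro a b hb
  set Q : MvPolynomial (Fin 2) ℤ :=
    ((a : MvPolynomial (Fin 2) ℤ) * X 0 ^ k + (b : MvPolynomial (Fin 2) ℤ) * X 1) *
      ((a : MvPolynomial (Fin 2) ℤ) * X 0 ^ k + (b : MvPolynomial (Fin 2) ℤ) * X 1 +
        ((ρ ^ k : ℤ) : MvPolynomial (Fin 2) ℤ) * X 0 ^ k) with hQdef
  have key : ((a : MvPolynomial (Fin 2) ℤ ⧸ trivIdeal ℓ) *
            (Ideal.Quotient.mk (trivIdeal ℓ) (X 0)) ^ k +
          (b : _) * Ideal.Quotient.mk (trivIdeal ℓ) (X 1)) *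
        ((a : _) * (Ideal.Quotient.mk (trivIdeal ℓ) (X 0)) ^ k +
            (b : _) * Ideal.Quotient.mk (trivIdeal ℓ) (X 1) +
          ((ρ ^ k : ℤ) : _) * (Ideal.Quotient.mk (trivIdeal ℓ) (X 0)) ^ k)
      = Ideal.Quotient.mk (trivIdeal ℓ) Q := by
    rw [hQdef]
    push_cast
    simp only [map_mul, map_add, map_pow, map_intCast]
  rw [key, Ne, Ideal.Quotient.eq_zero_iff_mem]
  intro hmem
  have h0 := aux_coeff_zero ℓ k hkl Q hmem
  rw [hQdef, aux_coeff_Q] at h0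
  have hodd : Odd (b * (2 * a + ρ ^ k)) := by
    have h1 : Odd (2 * a + ρ ^ k) := (even_two_mul a).add_odd hρ
    rcases hb with rfl | rfl
    · simpa using h1
    · simpa using h1.neg
  rw [h0] at hodd
  exact (by decide : ¬ Odd (0 : ℤ)) hodd
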